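/- arXiv:2305.16536 — 2 statements merged into one kernel-verified Lean document; each statement's English description precedes it below -/
import Mathlib

section
/- (Minimum-norm global minimizer of the contrastive trace loss, Lemma B.2.) Suppose p ≥ rank(P). Then W** ∈ ℝ^{p×N} is a minimum-norm global minimizer of L — i.e., it minimizes the Frobenius norm ‖W‖_F among all global minimizers W of L(W) = Tr(−2 WᵀW P + WᵀW Q WᵀW Q) — if and only if W**ᵀ W** = Q† P Q†. -/
open Matrix

/-- The contrastive trace loss `Tr(-2 WᵀW P + WᵀW Q WᵀW Q)`. -/
noncomputable def CLTraceLoss {p N : ℕ} (P Q : Matrix (Fin N) (Fin N) ℝ)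
    (W : Matrix (Fin p) (Fin N) ℝ) : ℝ :=
  Matrix.trace ((-2 : ℝ) • (Wᵀ * W * P) + Wᵀ * W * Q * (Wᵀ * W) * Q)

/-- `Ad` is the Moore–Penrose pseudoinverse of `A`. -/
def IsPseudoinverse {N : ℕ} (A Ad : Matrix (Fin N) (Fin N) ℝ) : Prop :=
  A * Ad * A = A ∧ Ad * A * Ad = Ad ∧ (A * Ad)ᵀ = A * Ad ∧ (Ad * A)ᵀ = Ad * A

/-! With `X = Q† P Q†` the range condition gives `Q X Q = P`, so completing the square yields
`L(W) = tr((WᵀW - X) Q (WᵀW - X) Q) - tr(X Q X Q)`. Writing `Q = CᵀC`, the first term is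
`‖C (WᵀW - X) Cᵀ‖²_F ≥ 0`, so the global minimizers are exactly the `W` with `Q WᵀW Q = P`;
the minimum is attained because `X` is positive semidefinite of rank `≤ rank P ≤ p`, hence of
the form `W₀ᵀW₀`. For a minimizer, `R = Q Q†` is an orthogonal projection with
`(WR)ᵀ(WR) = Q† (Q WᵀW Q) Q† = X`, so `‖W‖²_F = tr X + ‖W (1 - R)‖²_F`, with equality iff
`WᵀW = X`. -/

namespace Matrix

variable {k m n : Type*}

theorem trace_transpose_mul_self_eq_sum_sq [Fintype m] [Fintype n] (B : Matrix m n ℝ) :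
    trace (Bᵀ * B) = ∑ i, ∑ j, B i j ^ 2 := by
  simp only [trace, diag, mul_apply, transpose_apply, sq]
  exact Finset.sum_comm

theorem trace_transpose_mul_self_nonneg [Fintype m] [Fintype n] (B : Matrix m n ℝ) :
    0 ≤ trace (Bᵀ * B) :=
  (posSemidef_conjTranspose_mul_self B).trace_nonneg

theorem trace_transpose_mul_self_eq_zero_iff [Fintype m] [Fintype n] {B : Matrix m n ℝ} :
    trace (Bᵀ * B) = 0 ↔ B = 0 :=
  trace_conjTranspose_mul_self_eq_zero_iff

theorem trace_transpose_mul_self_mul_eq [Fintype m] [Fintype n] {S : Matrix n n ℝ}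
    (hSt : Sᵀ = S) (hSS : S * S = S) (W : Matrix m n ℝ) :
    trace ((W * S)ᵀ * (W * S)) = trace (Wᵀ * W * S) := by
  rw [transpose_mul, hSt, Matrix.mul_assoc S, trace_mul_comm S]
  simp only [Matrix.mul_assoc, hSS]

theorem trace_transpose_mul_self_eq_add [Fintype m] [Fintype n] [DecidableEq n]
    {R : Matrix n n ℝ} (hRt : Rᵀ = R) (hRR : R * R = R) (W : Matrix m n ℝ) :
    trace (Wᵀ * W) = trace ((W * R)ᵀ * (W * R)) + trace ((W * (1 - R))ᵀ * (W * (1 - R))) := by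
  have hR't : (1 - R)ᵀ = 1 - R := by rw [transpose_sub, transpose_one, hRt]
  have hRR' : (1 - R) * (1 - R) = 1 - R := by
    rw [sub_mul, one_mul, mul_sub, mul_one, hRR, sub_self, sub_zero]
  rw [trace_transpose_mul_self_mul_eq hRt hRR, trace_transpose_mul_self_mul_eq hR't hRR',
    ← trace_add, ← mul_add, add_sub_cancel, mul_one]

theorem trace_transpose_mul_self_mul_le [Fintype m] [Fintype n] [DecidableEq n]
    {R : Matrix n n ℝ} (hRt : Rᵀ = R) (hRR : R * R = R) (W : Matrix m n ℝ) :
    trace ((W * R)ᵀ * (W * R)) ≤ trace (Wᵀ * W) := by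
  rw [trace_transpose_mul_self_eq_add hRt hRR W]
  linarith [trace_transpose_mul_self_nonneg (W * (1 - R))]

theorem mul_eq_self_of_trace_transpose_mul_self_le [Fintype m] [Fintype n] [DecidableEq n]
    {R : Matrix n n ℝ} (hRt : Rᵀ = R) (hRR : R * R = R) {W : Matrix m n ℝ}
    (h : trace (Wᵀ * W) ≤ trace ((W * R)ᵀ * (W * R))) : W * R = W := by
  rw [trace_transpose_mul_self_eq_add hRt hRR W] at h
  have h0 : trace ((W * (1 - R))ᵀ * (W * (1 - R))) = 0 :=
    le_antisymm (by linarith) (trace_transpose_mul_self_nonneg _)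
  rw [trace_transpose_mul_self_eq_zero_iff, Matrix.mul_sub, Matrix.mul_one, sub_eq_zero] at h0
  exact h0.symm

theorem submatrix_transpose_mul_self {R : Type*} [NonUnitalNonAssocSemiring R] {S : Type*}
    [Fintype S] [Fintype m] (B : Matrix m n R) {g : S → m} (hg : Function.Injective g)
    (hB : ∀ i ∉ Set.range g, B i = 0) :
    (B.submatrix g id)ᵀ * B.submatrix g id = Bᵀ * B := by
  ext i j
  rw [mul_apply, mul_apply]
  exact Fintype.sum_of_injective g hg _ _ (fun x hx => by simp [hB x hx]) fun _ => rfl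

theorem exists_transpose_mul_self_eq_of_card_le [Fintype k] (C : Matrix k n ℝ) {p : ℕ}
    (h : Fintype.card k ≤ p) : ∃ W : Matrix (Fin p) n ℝ, Wᵀ * W = Cᵀ * C := by
  classical
  obtain ⟨e⟩ : Nonempty (k ↪ Fin p) :=
    Function.Embedding.nonempty_of_card_le (by simpa using h)
  let E : Matrix (Fin p) k ℝ := of fun r s => if e s = r then 1 else 0
  have hE : Eᵀ * E = 1 := by
    ext s t
    simp [E, mul_apply, one_apply, eq_comm]
  refine ⟨E * C, ?_⟩
  rw [transpose_mul, Matrix.mul_assoc, ← Matrix.mul_assoc Eᵀ, hE, Matrix.one_mul]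

theorem PosSemidef.exists_transpose_mul_self_eq_of_rank_le [Fintype n] [DecidableEq n]
    {A : Matrix n n ℝ} (hA : A.PosSemidef) {p : ℕ} (h : A.rank ≤ p) :
    ∃ W : Matrix (Fin p) n ℝ, Wᵀ * W = A := by
  set U : Matrix n n ℝ := (hA.1.eigenvectorUnitary : Matrix n n ℝ)
  set B := diagonal (fun i => √(hA.1.eigenvalues i)) * Uᵀ
  have hBB : Bᵀ * B = A := by
    have hspec := hA.1.spectral_theorem
    simp only [RCLike.ofReal_real_eq_id, CompTriple.comp_eq, Unitary.conjStarAlgAut_apply,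
      star_eq_conjTranspose, conjTranspose_eq_transpose_of_trivial] at hspec
    have hsq : (fun i => √(hA.1.eigenvalues i) * √(hA.1.eigenvalues i)) = hA.1.eigenvalues :=
      funext fun i => Real.mul_self_sqrt (hA.eigenvalues_nonneg i)
    rw [transpose_mul, transpose_transpose, diagonal_transpose, Matrix.mul_assoc,
      ← Matrix.mul_assoc (diagonal _), diagonal_mul_diagonal, ← Matrix.mul_assoc, hsq]
    exact hspec.symm
  have hB : ∀ i ∉ Set.range (Subtype.val : {i // hA.1.eigenvalues i ≠ 0} → n), B i = 0 := by
    intro i hi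
    have : hA.1.eigenvalues i = 0 := by simpa using hi
    ext j
    simp [B, mul_apply, diagonal_apply, this]
  obtain ⟨W, hW⟩ := exists_transpose_mul_self_eq_of_card_le (B.submatrix Subtype.val id)
    (hA.1.rank_eq_card_non_zero_eigs ▸ h)
  exact ⟨W, by rw [hW, submatrix_transpose_mul_self B Subtype.val_injective hB, hBB]⟩

theorem trace_mul_mul_mul_eq_trace_transpose_mul_self [Fintype k] [Fintype n]
    {A : Matrix n n ℝ} (hA : Aᵀ = A) (C : Matrix k n ℝ) :
    trace (A * (Cᵀ * C) * A * (Cᵀ * C)) = trace ((C * A * Cᵀ)ᵀ * (C * A * Cᵀ)) := by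
  rw [transpose_mul, transpose_mul, transpose_transpose, hA]
  simp only [Matrix.mul_assoc]
  rw [trace_mul_comm C]
  simp only [Matrix.mul_assoc]

theorem PosSemidef.trace_mul_mul_mul_nonneg [Fintype n] [DecidableEq n] {Q A : Matrix n n ℝ}
    (hQ : Q.PosSemidef) (hA : Aᵀ = A) : 0 ≤ trace (A * Q * A * Q) := by
  obtain ⟨C, rfl⟩ := hQ.exists_transpose_mul_self_eq_of_rank_le (rank_le_card_height Q)
  rw [trace_mul_mul_mul_eq_trace_transpose_mul_self hA]
  exact trace_transpose_mul_self_nonneg _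

theorem PosSemidef.mul_mul_eq_zero_of_trace_eq_zero [Fintype n] [DecidableEq n]
    {Q A : Matrix n n ℝ} (hQ : Q.PosSemidef) (hA : Aᵀ = A) (h : trace (A * Q * A * Q) = 0) :
    Q * A * Q = 0 := by
  obtain ⟨C, rfl⟩ := hQ.exists_transpose_mul_self_eq_of_rank_le (rank_le_card_height Q)
  rw [trace_mul_mul_mul_eq_trace_transpose_mul_self hA, trace_transpose_mul_self_eq_zero_iff] at h
  calc Cᵀ * C * A * (Cᵀ * C) = Cᵀ * (C * A * Cᵀ) * C := by simp only [Matrix.mul_assoc]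
    _ = 0 := by rw [h, Matrix.mul_zero, Matrix.zero_mul]

end Matrix

namespace IsPseudoinverse

variable {N : ℕ} {A Ad : Matrix (Fin N) (Fin N) ℝ}

theorem transpose (h : IsPseudoinverse A Ad) : IsPseudoinverse Aᵀ Adᵀ := by
  obtain ⟨h1, h2, h3, h4⟩ := h
  refine ⟨?_, ?_, ?_, ?_⟩
  · rw [← transpose_mul, ← transpose_mul, ← Matrix.mul_assoc, h1]
  · rw [← transpose_mul, ← transpose_mul, ← Matrix.mul_assoc, h2]
  · rw [← transpose_mul, h4, h4]
  · rw [← transpose_mul, h3, h3]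

theorem unique {B C : Matrix (Fin N) (Fin N) ℝ} (hB : IsPseudoinverse A B)
    (hC : IsPseudoinverse A C) : B = C := by
  obtain ⟨b1, b2, b3, b4⟩ := hB
  obtain ⟨c1, c2, c3, c4⟩ := hC
  have hAB : A * B = A * C := by
    calc A * B = (A * C)ᵀ * (A * B)ᵀ := by rw [c3, b3, ← Matrix.mul_assoc, c1]
      _ = (A * B * A * C)ᵀ := by rw [← transpose_mul]; simp only [Matrix.mul_assoc]
      _ = A * C := by rw [b1, c3]
  have hBA : B * A = C * A := by
    calc B * A = (B * A)ᵀ * (C * A)ᵀ := by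
          rw [c4, b4, Matrix.mul_assoc, ← Matrix.mul_assoc A, c1]
      _ = (C * (A * B * A))ᵀ := by rw [← transpose_mul]; simp only [Matrix.mul_assoc]
      _ = C * A := by rw [b1, c4]
  rw [← b2, Matrix.mul_assoc, hAB, ← Matrix.mul_assoc, hBA, c2]

theorem transpose_eq_self (hA : Aᵀ = A) (h : IsPseudoinverse A Ad) : Adᵀ = Ad :=
  unique (hA ▸ h.transpose) h

theorem mul_mul_eq_of_range_le (h : IsPseudoinverse A Ad) {P : Matrix (Fin N) (Fin N) ℝ}
    (hP : LinearMap.range P.mulVecLin ≤ LinearMap.range A.mulVecLin) : A * Ad * P = P := by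
  refine mulVec_injective (funext fun x => ?_)
  obtain ⟨y, hy⟩ := hP (LinearMap.mem_range_self P.mulVecLin x)
  simp only [mulVecLin_apply] at hy
  rw [← mulVec_mulVec, ← hy, mulVec_mulVec, h.1]

theorem mul_mul_mul_mul_eq_of_range_le (h : IsPseudoinverse A Ad) (hAt : Aᵀ = A)
    {P : Matrix (Fin N) (Fin N) ℝ} (hPt : Pᵀ = P)
    (hP : LinearMap.range P.mulVecLin ≤ LinearMap.range A.mulVecLin) :
    A * (Ad * P * Ad) * A = P := by
  have hAAdP := h.mul_mul_eq_of_range_le hP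
  have hPAdA : P * Ad * A = P := by
    simpa only [transpose_mul, hPt, hAt, h.transpose_eq_self hAt, Matrix.mul_assoc]
      using congrArg Matrix.transpose hAAdP
  rw [show A * (Ad * P * Ad) * A = A * Ad * P * Ad * A by simp only [Matrix.mul_assoc], hAAdP,
    hPAdA]

end IsPseudoinverse

section Loss

variable {p N : ℕ} {P Q X : Matrix (Fin N) (Fin N) ℝ}

theorem CLTraceLoss_eq_trace_sub_trace (hX : Q * X * Q = P) (W : Matrix (Fin p) (Fin N) ℝ) :
    CLTraceLoss P Q W
      = trace ((Wᵀ * W - X) * Q * (Wᵀ * W - X) * Q) - trace (X * Q * X * Q) := by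
  set M := Wᵀ * W
  have hexpand : (M - X) * Q * (M - X) * Q
      = M * Q * M * Q - M * (Q * X * Q) - X * Q * (M * Q) + X * Q * X * Q := by
    noncomm_ring
  have hcyc : trace (X * Q * (M * Q)) = trace (M * (Q * X * Q)) := by
    rw [trace_mul_comm]; simp only [Matrix.mul_assoc]
  rw [hexpand, trace_add, trace_sub, trace_sub, hcyc, hX]
  simp only [CLTraceLoss, trace_add, trace_smul, smul_eq_mul, M, Matrix.mul_assoc]
  ring

theorem forall_CLTraceLoss_le_iff (hQ : Q.PosSemidef) (hXt : Xᵀ = X) (hX : Q * X * Q = P)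
    {W₀ : Matrix (Fin p) (Fin N) ℝ} (hW₀ : W₀ᵀ * W₀ = X)
    (W : Matrix (Fin p) (Fin N) ℝ) :
    (∀ W' : Matrix (Fin p) (Fin N) ℝ, CLTraceLoss P Q W ≤ CLTraceLoss P Q W') ↔
      Q * (Wᵀ * W) * Q = P := by
  set D := Wᵀ * W - X
  have hsymm : ∀ V : Matrix (Fin p) (Fin N) ℝ, (Vᵀ * V - X)ᵀ = Vᵀ * V - X := fun V => by
    rw [transpose_sub, transpose_mul, transpose_transpose, hXt]
  have hlow : ∀ V : Matrix (Fin p) (Fin N) ℝ, -trace (X * Q * X * Q) ≤ CLTraceLoss P Q V :=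
    fun V => by
      rw [CLTraceLoss_eq_trace_sub_trace hX]
      linarith [hQ.trace_mul_mul_mul_nonneg (hsymm V)]
  have hW₀min : CLTraceLoss P Q W₀ = -trace (X * Q * X * Q) := by
    rw [CLTraceLoss_eq_trace_sub_trace hX, hW₀, sub_self]
    simp
  constructor
  · intro hmin
    have h0 : trace (D * Q * D * Q) = 0 :=
      le_antisymm (by linarith [hmin W₀, CLTraceLoss_eq_trace_sub_trace hX W])
        (hQ.trace_mul_mul_mul_nonneg (hsymm W))
    have hzero := hQ.mul_mul_eq_zero_of_trace_eq_zero (hsymm W) h0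
    rwa [mul_sub, sub_mul, hX, sub_eq_zero] at hzero
  · intro hW W'
    have hzero : Q * D * Q = 0 := by rw [mul_sub, sub_mul, hW, hX, sub_self]
    have h0 : trace (D * Q * D * Q) = 0 := by
      rw [show D * Q * D * Q = D * (Q * D * Q) by simp only [Matrix.mul_assoc], hzero,
        Matrix.mul_zero, trace_zero]
    rw [CLTraceLoss_eq_trace_sub_trace hX W, h0]
    linarith [hlow W']

end Loss

theorem stmt_6 (N p : ℕ)
    (P Q : Matrix (Fin N) (Fin N) ℝ) (hP : P.PosSemidef) (hQ : Q.PosSemidef)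
    (hcol : LinearMap.range P.mulVecLin ≤ LinearMap.range Q.mulVecLin)
    (hp : P.rank ≤ p)
    (Qd : Matrix (Fin N) (Fin N) ℝ) (hQd : IsPseudoinverse Q Qd)
    (Wss : Matrix (Fin p) (Fin N) ℝ) :
    ((∀ W : Matrix (Fin p) (Fin N) ℝ, CLTraceLoss P Q Wss ≤ CLTraceLoss P Q W) ∧
      (∀ W : Matrix (Fin p) (Fin N) ℝ,
        (∀ W' : Matrix (Fin p) (Fin N) ℝ, CLTraceLoss P Q W ≤ CLTraceLoss P Q W') →
        Real.sqrt (∑ i, ∑ j, (Wss i j) ^ 2) ≤ Real.sqrt (∑ i, ∑ j, (W i j) ^ 2)))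
      ↔ Wssᵀ * Wss = Qd * P * Qd := by
  have hPt : Pᵀ = P := by rw [← conjTranspose_eq_transpose_of_trivial]; exact hP.1
  have hQt : Qᵀ = Q := by rw [← conjTranspose_eq_transpose_of_trivial]; exact hQ.1
  have hQdt : Qdᵀ = Qd := hQd.transpose_eq_self hQt
  set X := Qd * P * Qd
  have hXt : Xᵀ = X := by simp only [X, transpose_mul, hPt, hQdt, Matrix.mul_assoc]
  have hQXQ : Q * X * Q = P := hQd.mul_mul_mul_mul_eq_of_range_le hQt hPt hcol
  obtain ⟨W₀, hW₀⟩ : ∃ W₀ : Matrix (Fin p) (Fin N) ℝ, W₀ᵀ * W₀ = X := by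
    refine PosSemidef.exists_transpose_mul_self_eq_of_rank_le ?_
      ((rank_mul_le_left _ _).trans ((rank_mul_le_right _ _).trans hp))
    simpa only [conjTranspose_eq_transpose_of_trivial, hQdt] using hP.conjTranspose_mul_mul_same Qd
  have hmin := forall_CLTraceLoss_le_iff hQ hXt hQXQ hW₀
  set R := Q * Qd
  have hRt : Rᵀ = R := hQd.2.2.1
  have hRR : R * R = R := by rw [← Matrix.mul_assoc, hQd.1]
  have hWR : ∀ W : Matrix (Fin p) (Fin N) ℝ, Q * (Wᵀ * W) * Q = P →
      (W * R)ᵀ * (W * R) = X := fun W hW => by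
    simp only [R, transpose_mul, hQt, hQdt, X, ← hW, Matrix.mul_assoc]
  simp only [hmin, ← trace_transpose_mul_self_eq_sum_sq]
  constructor
  · rintro ⟨hWss, hnorm⟩
    have hle := (Real.sqrt_le_sqrt_iff (trace_transpose_mul_self_nonneg W₀)).1
      (hnorm W₀ (hW₀ ▸ hQXQ))
    rw [← hWR Wss hWss, mul_eq_self_of_trace_transpose_mul_self_le hRt hRR]
    rwa [hWR Wss hWss, ← hW₀]
  · intro hWss
    refine ⟨hWss ▸ hQXQ, fun W hW => Real.sqrt_le_sqrt ?_⟩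
    rw [hWss, ← hWR W hW]
    exact trace_transpose_mul_self_mul_le hRt hRR W
end

section
/- (Minimum value of the contrastive trace loss.) The matrix Q† P is diagonalizable with nonnegative real eigenvalues; let λ_1 ≥ λ_2 ≥ … ≥ λ_N ≥ 0 be these eigenvalues listed with algebraic multiplicity. Then for every p ≥ 1, the minimum of L(W) = Tr(−2 WᵀW P + WᵀW Q WᵀW Q) over W ∈ ℝ^{p×N} is attained and equals −(λ_1² + λ_2² + … + λ_{min(p,N)}²). -/
/-!
Let `R = Q^{1/2}` and `M = Q^{-1/2} P Q^{-1/2}`. Since `range P ⊆ range Q` we have `P = R M R`, so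
`L(W) = tr(X²) - 2 tr(X M)` with `X = R WᵀW R`, a positive semidefinite matrix of rank `≤ p`;
and `Q† P` is similar to `M` (conjugate by `Q^{1/2}` on `range Q`, by the identity on `ker Q`),
so the `λᵢ` are the eigenvalues of `M`.

In eigenbases `X = ∑ νⱼ uⱼuⱼᵀ`, `M = ∑ λᵢ vᵢvᵢᵀ` the loss is `∑ⱼ (νⱼ² - 2 νⱼ mⱼ)` with
`m = B λ`, `B = ((uⱼ·vᵢ)²)` doubly stochastic. Each term is `≥ -mⱼ²` and vanishes when `νⱼ = 0`;
by Jensen `mⱼ² ≤ ∑ᵢ Bⱼᵢ λᵢ²`, and summing over the `≤ p` rows with `νⱼ ≠ 0` gives weights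
`tᵢ ∈ [0, 1]` on the `λᵢ²` of total mass `≤ p`, hence at most `λ₁² + ⋯ + λₚ²`. Equality holds
for `X` the truncation of `M` to its top `p` eigenvalues, which is of the form `R WᵀW R`.
-/

open Matrix

open Finset

theorem sum_mul_le_sum_lt_of_antitone {N p : ℕ} {a t : Fin N → ℝ} (ha : Antitone a)
    (ha0 : ∀ i, 0 ≤ a i) (ht0 : ∀ i, 0 ≤ t i) (ht1 : ∀ i, t i ≤ 1) (htp : ∑ i, t i ≤ p) :
    ∑ i, t i * a i ≤ ∑ i : Fin N, if (i : ℕ) < p then a i else 0 := by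
  -- compare each term with the threshold `c = a p` (`0` if `N ≤ p`)
  set c : ℝ := if h : p < N then a ⟨p, h⟩ else 0
  have hc0 : 0 ≤ c := by unfold c; split_ifs <;> simp [ha0]
  have hterm : ∀ i : Fin N,
      t i * a i - (if (i : ℕ) < p then a i else 0) ≤ (t i - if (i : ℕ) < p then 1 else 0) * c := by
    intro i
    split_ifs with hi
    · have : c ≤ a i := by
        unfold c; split_ifs with h
        · exact ha (Fin.mk_le_mk.mpr hi.le)
        · exact ha0 i
      nlinarith [ht1 i]
    · have : a i ≤ c := by
        have h : p < N := by omega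
        simp only [c, dif_pos h]
        exact ha (Fin.mk_le_mk.mpr (by omega))
      nlinarith [ht0 i]
  have hcount : (∑ i, t i - ∑ i : Fin N, if (i : ℕ) < p then (1 : ℝ) else 0) * c ≤ 0 := by
    rw [Finset.sum_boole, Fin.card_filter_val_lt]
    by_cases h : p < N
    · rw [min_eq_right h.le]
      exact mul_nonpos_of_nonpos_of_nonneg (by linarith) hc0
    · simp [c, dif_neg h]
  have := Finset.sum_le_sum fun i (_ : i ∈ univ) => hterm i
  rw [Finset.sum_sub_distrib, ← Finset.sum_mul, Finset.sum_sub_distrib] at this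
  linarith

theorem neg_sum_sq_le_of_mem_doublyStochastic {N p : ℕ} {B : Matrix (Fin N) (Fin N) ℝ}
    (hB : B ∈ doublyStochastic ℝ (Fin N)) {ν a : Fin N → ℝ} (hν : #{j | ν j ≠ 0} ≤ p)
    (ha : Antitone a) (ha0 : ∀ i, 0 ≤ a i) :
    -(∑ i : Fin N, if (i : ℕ) < p then a i ^ 2 else 0) ≤ ∑ j, (ν j ^ 2 - 2 * ν j * (B *ᵥ a) j) := by
  obtain ⟨hB0, hrow, hcol⟩ := mem_doublyStochastic_iff_sum.mp hB
  set s : Finset (Fin N) := {j | ν j ≠ 0}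
  set t : Fin N → ℝ := fun i => ∑ j ∈ s, B j i
  have hjensen : ∀ j, (B *ᵥ a) j ^ 2 ≤ ∑ i, B j i * a i ^ 2 := fun j =>
    (Even.convexOn_pow (n := 2) even_two).map_sum_le (fun i _ => hB0 j i) (hrow j)
      (fun i _ => Set.mem_univ _)
  have hterm : ∀ j, -(if j ∈ s then (B *ᵥ a) j ^ 2 else 0) ≤ ν j ^ 2 - 2 * ν j * (B *ᵥ a) j := by
    intro j
    by_cases hj : ν j = 0
    · simp [s, hj]
    · simp only [s, mem_filter, mem_univ, true_and, if_pos hj]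
      nlinarith [sq_nonneg (ν j - (B *ᵥ a) j)]
  calc -(∑ i : Fin N, if (i : ℕ) < p then a i ^ 2 else 0)
      ≤ -∑ i, t i * a i ^ 2 := by
        refine neg_le_neg (sum_mul_le_sum_lt_of_antitone ?_ (fun i => sq_nonneg _)
          (fun i => sum_nonneg fun j _ => hB0 j i) (fun i => ?_) ?_)
        · exact fun i j hij => pow_le_pow_left₀ (ha0 j) (ha hij) 2
        · exact (sum_le_sum_of_subset_of_nonneg (subset_univ s) fun j _ _ => hB0 j i).trans_eq
            (hcol i)
        · rw [Finset.sum_comm, Finset.sum_congr rfl fun j _ => hrow j]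
          simpa using hν
    _ = -∑ j ∈ s, ∑ i, B j i * a i ^ 2 := by
        simp only [t, Finset.sum_mul]; rw [Finset.sum_comm]
    _ ≤ -∑ j ∈ s, (B *ᵥ a) j ^ 2 := neg_le_neg (sum_le_sum fun j _ => hjensen j)
    _ = ∑ j, -(if j ∈ s then (B *ᵥ a) j ^ 2 else 0) := by
        rw [Finset.sum_neg_distrib, Finset.sum_ite_mem, univ_inter]
    _ ≤ ∑ j, (ν j ^ 2 - 2 * ν j * (B *ᵥ a) j) := sum_le_sum fun j _ => hterm j

theorem exists_equiv_comp_eq_of_map_univ_eq {α β γ : Type*} [Fintype α] [Fintype β]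
    [DecidableEq γ] {f : α → γ} {g : β → γ} (h : univ.val.map f = univ.val.map g) :
    ∃ e : β ≃ α, f ∘ e = g := by
  classical
  have hfiber : ∀ c, Fintype.card {b // g b = c} = Fintype.card {a // f a = c} := fun c => by
    simpa [Multiset.count_map, Fintype.card_subtype, eq_comm, Finset.card, Finset.filter_val]
      using congrArg (Multiset.count c) h.symm
  exact ⟨Equiv.ofFiberEquiv fun c => Fintype.equivOfCardEq (hfiber c),
    funext (Equiv.ofFiberEquiv_map _)⟩

section Spectral

variable {n : Type*} [Fintype n] [DecidableEq n]

theorem Matrix.IsHermitian.exists_eq_conj_diagonal_eigenvalues {A : Matrix n n ℝ}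
    (hA : A.IsHermitian) :
    ∃ U : Matrix n n ℝ, Uᵀ * U = 1 ∧ A = U * diagonal hA.eigenvalues * Uᵀ := by
  refine ⟨hA.eigenvectorUnitary, ?_, ?_⟩
  · simpa [star_eq_conjTranspose] using Unitary.coe_star_mul_self hA.eigenvectorUnitary
  · conv_lhs => rw [hA.spectral_theorem, Unitary.conjStarAlgAut_apply]
    simp [star_eq_conjTranspose]

theorem Matrix.hadamard_self_mem_doublyStochastic {U : Matrix n n ℝ} (hU : Uᵀ * U = 1) :
    U ⊙ U ∈ doublyStochastic ℝ n := by
  have hU' : U * Uᵀ = 1 := mul_eq_one_comm.mp hU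
  refine mem_doublyStochastic_iff_sum.mpr ⟨fun i j => mul_self_nonneg _, fun i => ?_, fun j => ?_⟩
  · simpa [mul_apply] using congrFun (congrFun hU' i) i
  · simpa [mul_apply] using congrFun (congrFun hU j) j

theorem Matrix.trace_conj_diagonal_mul_conj_diagonal (U V : Matrix n n ℝ) (a b : n → ℝ) :
    trace (U * diagonal a * Uᵀ * (V * diagonal b * Vᵀ)) =
      ∑ j, a j * (((Uᵀ * V) ⊙ (Uᵀ * V)) *ᵥ b) j := by
  rw [show U * diagonal a * Uᵀ * (V * diagonal b * Vᵀ) =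
      U * (diagonal a * (Uᵀ * V) * diagonal b * Vᵀ) by simp only [Matrix.mul_assoc],
    trace_mul_comm, show diagonal a * (Uᵀ * V) * diagonal b * Vᵀ * U =
      diagonal a * ((Uᵀ * V) * diagonal b * (Uᵀ * V)ᵀ) by
      simp only [transpose_mul, transpose_transpose, Matrix.mul_assoc]]
  generalize Uᵀ * V = G
  simp only [trace, diag_apply, mul_apply, diagonal_apply, mul_ite, mul_zero, sum_ite_eq',
    mem_univ, ↓reduceIte, transpose_apply, mul_sum, ite_mul, zero_mul, sum_ite_irrel,
    sum_const_zero, sum_ite_eq, mulVec, dotProduct, hadamard_apply]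
  exact sum_congr rfl fun j _ => sum_congr rfl fun i _ => by ring

theorem Matrix.trace_conj_diagonal_mul_conj_diagonal_self {U : Matrix n n ℝ} (hU : Uᵀ * U = 1)
    (a b : n → ℝ) : trace (U * diagonal a * Uᵀ * (U * diagonal b * Uᵀ)) = ∑ j, a j * b j := by
  simp [trace_conj_diagonal_mul_conj_diagonal, hU, hadamard_one]

theorem Matrix.conj_diagonal_mul_conj_diagonal {V : Matrix n n ℝ} (hV : Vᵀ * V = 1) (a b : n → ℝ) :
    V * diagonal a * Vᵀ * (V * diagonal b * Vᵀ) = V * diagonal (a * b) * Vᵀ := by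
  rw [show V * diagonal a * Vᵀ * (V * diagonal b * Vᵀ) =
    V * (diagonal a * (Vᵀ * V) * diagonal b) * Vᵀ by simp only [Matrix.mul_assoc], hV,
    Matrix.mul_one, diagonal_mul_diagonal']
  rfl

open Polynomial in
theorem Matrix.roots_charpoly_conj_diagonal {K : Type*} [Field K] {S : Matrix n n K}
    (hS : IsUnit S.det) (a : n → K) : (S * diagonal a * S⁻¹).charpoly.roots = univ.val.map a := by
  have hSu : IsUnit S := (isUnit_iff_isUnit_det S).mpr hS
  have := charpoly_units_conj hSu.unit (diagonal a)
  rw [IsUnit.unit_spec] at this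
  rw [this, charpoly_diagonal, Finset.prod_eq_multiset_prod]
  simpa [Multiset.map_map, Function.comp_def] using roots_multiset_prod_X_sub_C (univ.val.map a)

theorem Matrix.exists_equiv_comp_eq_of_conj_diagonal_eq {K : Type*} [Field K] [DecidableEq K]
    {S T : Matrix n n K} {a b : n → K} (hS : IsUnit S.det) (hT : IsUnit T.det)
    (h : S * diagonal a * S⁻¹ = T * diagonal b * T⁻¹) : ∃ e : n ≃ n, a ∘ e = b := by
  refine exists_equiv_comp_eq_of_map_univ_eq ?_
  rw [← roots_charpoly_conj_diagonal hS, ← roots_charpoly_conj_diagonal hT, h]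

theorem Matrix.exists_conj_diagonal_eq_conj_diagonal_comp {U : Matrix n n ℝ} (hU : Uᵀ * U = 1)
    (a : n → ℝ) (e : n ≃ n) :
    ∃ V : Matrix n n ℝ, Vᵀ * V = 1 ∧ U * diagonal (a ∘ e) * Uᵀ = V * diagonal a * Vᵀ := by
  refine ⟨U.submatrix id e.symm, ?_, ?_⟩
  · simpa [hU] using submatrix_mul_equiv Uᵀ U e.symm (Equiv.refl n) e.symm
  · rw [show diagonal a = (diagonal (a ∘ e)).submatrix e.symm e.symm by
      simp [submatrix_diagonal_equiv, Function.comp_def], transpose_submatrix,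
      submatrix_mul_equiv, submatrix_mul_equiv, submatrix_id_id]

theorem Matrix.cfc_transpose (f : ℝ → ℝ) (A : Matrix n n ℝ) : (cfc f A)ᵀ = cfc f A := by
  simpa [star_eq_conjTranspose] using (cfc_predicate f A : IsSelfAdjoint (cfc f A)).star_eq

theorem Matrix.cfc_mul_cfc {A : Matrix n n ℝ} {f g h : ℝ → ℝ}
    (hfg : ∀ x ∈ spectrum ℝ A, f x * g x = h x) : cfc f A * cfc g A = cfc h A := by
  rw [← cfc_mul f g A (finite_real_spectrum.continuousOn f) (finite_real_spectrum.continuousOn g)]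
  exact cfc_congr hfg

theorem Matrix.PosSemidef.nonneg_of_mem_spectrum {A : Matrix n n ℝ} (hA : A.PosSemidef) {x : ℝ}
    (hx : x ∈ spectrum ℝ A) : 0 ≤ x := by
  rw [hA.isHermitian.spectrum_real_eq_range_eigenvalues] at hx
  obtain ⟨i, rfl⟩ := hx
  exact hA.eigenvalues_nonneg i

end Spectral

theorem Matrix.mul_eq_of_mul_eq_of_range_le {m n : Type*} [Fintype m] [Fintype n] [DecidableEq n]
    {R : Type*} [CommRing R] {E Q : Matrix m m R} {P : Matrix m n R} (hEQ : E * Q = Q)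
    (hPQ : LinearMap.range P.mulVecLin ≤ LinearMap.range Q.mulVecLin) : E * P = P := by
  refine ext_of_mulVec_single fun j => ?_
  obtain ⟨v, hv⟩ := hPQ (LinearMap.mem_range_self P.mulVecLin (Pi.single j 1))
  simp only [mulVecLin_apply] at hv
  rw [← mulVec_mulVec, ← hv, mulVec_mulVec, hEQ]

theorem Matrix.neg_sum_sq_le_trace_transpose_mul_self_sub {N p : ℕ} {M V : Matrix (Fin N) (Fin N) ℝ}
    {lam : Fin N → ℝ} (hV : Vᵀ * V = 1) (hM : M = V * diagonal lam * Vᵀ) (hlam : Antitone lam)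
    (hlam0 : ∀ i, 0 ≤ lam i) (A : Matrix (Fin p) (Fin N) ℝ) :
    -(∑ i : Fin N, if (i : ℕ) < p then lam i ^ 2 else 0) ≤
      trace (Aᵀ * A * (Aᵀ * A)) - 2 * trace (Aᵀ * A * M) := by
  have hX : (Aᵀ * A).PosSemidef := by
    simpa using posSemidef_conjTranspose_mul_self A
  obtain ⟨U, hU, hXU⟩ := hX.isHermitian.exists_eq_conj_diagonal_eigenvalues
  have hrank : #{j | hX.isHermitian.eigenvalues j ≠ 0} ≤ p := by
    rw [← Fintype.card_subtype, ← hX.isHermitian.rank_eq_card_non_zero_eigs,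
      rank_transpose_mul_self]
    exact rank_le_height A
  generalize hX.isHermitian.eigenvalues = ν at hXU hrank
  have hUV : (Uᵀ * V)ᵀ * (Uᵀ * V) = 1 := by
    rw [transpose_mul, transpose_transpose, Matrix.mul_assoc, ← Matrix.mul_assoc U,
      mul_eq_one_comm.mp hU, Matrix.one_mul, hV]
  convert neg_sum_sq_le_of_mem_doublyStochastic (hadamard_self_mem_doublyStochastic hUV) hrank
    hlam hlam0 using 1
  rw [hM, hXU, trace_conj_diagonal_mul_conj_diagonal_self hU,
    trace_conj_diagonal_mul_conj_diagonal, Finset.mul_sum, ← Finset.sum_sub_distrib]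
  exact sum_congr rfl fun j _ => by ring

theorem exists_transpose_mul_self_eq_diagonal_lt (p : ℕ) {N : ℕ} {d : Fin N → ℝ}
    (hd : ∀ i, 0 ≤ d i) :
    ∃ C : Matrix (Fin p) (Fin N) ℝ,
      Cᵀ * C = diagonal fun i : Fin N => if (i : ℕ) < p then d i else 0 := by
  refine ⟨of fun a i => if (a : ℕ) = i then √(d i) else 0, ?_⟩
  ext i j
  simp only [mul_apply, transpose_apply, of_apply]
  rw [Fin.sum_univ_eq_sum_range (fun a => (if a = (i : ℕ) then √(d i) else 0) *
    (if a = (j : ℕ) then √(d j) else 0))]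
  by_cases hij : i = j
  · subst hij
    simp [← pow_two, Real.sq_sqrt (hd i)]
  · simp [hij, Fin.val_eq_val, Ne.symm hij]

theorem IsPseudoinverse.unique_s7 {N : ℕ} {A B C : Matrix (Fin N) (Fin N) ℝ}
    (hB : IsPseudoinverse A B) (hC : IsPseudoinverse A C) : B = C := by
  obtain ⟨hB1, hB2, hB3, hB4⟩ := hB
  obtain ⟨hC1, hC2, hC3, hC4⟩ := hC
  have hAB : A * B = A * C :=
    calc A * B = ((A * C) * (A * B))ᵀ := by rw [← Matrix.mul_assoc, hC1, hB3]
    _ = (A * B) * (A * C) := by rw [transpose_mul, hB3, hC3]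
    _ = A * C := by rw [← Matrix.mul_assoc, hB1]
  have hBA : B * A = C * A :=
    calc B * A = ((B * A) * (C * A))ᵀ := by rw [Matrix.mul_assoc, ← Matrix.mul_assoc A, hC1, hB4]
    _ = (C * A) * (B * A) := by rw [transpose_mul, hB4, hC4]
    _ = C * A := by rw [Matrix.mul_assoc, ← Matrix.mul_assoc A, hB1]
  calc B = B * A * B := hB2.symm
  _ = C * A * C := by rw [hBA, Matrix.mul_assoc, hAB, ← Matrix.mul_assoc]
  _ = C := hC2

theorem isPseudoinverse_cfc_inv {N : ℕ} {Q : Matrix (Fin N) (Fin N) ℝ} (hQ : Q.IsHermitian) :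
    IsPseudoinverse Q (cfc (fun x : ℝ => x⁻¹) Q) := by
  have hid : cfc (fun x : ℝ => x) Q = Q := cfc_id' ℝ Q hQ.isSelfAdjoint
  have hl : Q * cfc (fun x : ℝ => x⁻¹) Q = cfc (fun x : ℝ => x * x⁻¹) Q := by
    rw [← cfc_mul_cfc (f := fun x => x) fun x _ => rfl, hid]
  have hr : cfc (fun x : ℝ => x⁻¹) Q * Q = cfc (fun x : ℝ => x⁻¹ * x) Q := by
    rw [← cfc_mul_cfc (g := fun x => x) fun x _ => rfl, hid]
  refine ⟨?_, ?_, by rw [hl, cfc_transpose], by rw [hr, cfc_transpose]⟩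
  · calc Q * cfc (fun x : ℝ => x⁻¹) Q * Q = cfc (fun x : ℝ => x * x⁻¹) Q * cfc (fun x => x) Q := by
          rw [hl, hid]
    _ = Q := by rw [cfc_mul_cfc fun x _ => mul_inv_mul_cancel x, hid]
  · rw [hr, cfc_mul_cfc fun x _ => by simpa using mul_inv_mul_cancel x⁻¹]

section Whitening

variable {n : Type*} [Fintype n] [DecidableEq n] {P Q : Matrix n n ℝ}

/-- `Q^{-1/2} P Q^{-1/2}`, the inverse square root being `0` on the kernel of `Q`. -/
noncomputable def whitened (Q P : Matrix n n ℝ) : Matrix n n ℝ :=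
  cfc (fun x => (√x)⁻¹) Q * P * cfc (fun x => (√x)⁻¹) Q

theorem whitened_posSemidef (hP : P.PosSemidef) : (whitened Q P).PosSemidef := by
  simpa [whitened, cfc_transpose] using
    hP.conjTranspose_mul_mul_same (cfc (fun x => (√x)⁻¹) Q)

theorem cfc_mul_inv_mul_eq_of_range_le (hQ : Q.IsHermitian)
    (hPQ : LinearMap.range P.mulVecLin ≤ LinearMap.range Q.mulVecLin) :
    cfc (fun x : ℝ => x * x⁻¹) Q * P = P := by
  refine mul_eq_of_mul_eq_of_range_le ?_ hPQ
  conv_lhs => enter [2]; rw [← cfc_id' ℝ Q hQ.isSelfAdjoint]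
  rw [cfc_mul_cfc fun x _ => mul_inv_mul_cancel x, cfc_id' ℝ Q hQ.isSelfAdjoint]

theorem mul_cfc_mul_inv_eq_of_range_le (hQ : Q.IsHermitian) (hP : P.IsHermitian)
    (hPQ : LinearMap.range P.mulVecLin ≤ LinearMap.range Q.mulVecLin) :
    P * cfc (fun x : ℝ => x * x⁻¹) Q = P := by
  have hPt : Pᵀ = P := by rw [← conjTranspose_eq_transpose_of_trivial]; exact hP
  simpa [transpose_mul, hPt, cfc_transpose] using
    congrArg transpose (cfc_mul_inv_mul_eq_of_range_le hQ hPQ)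

theorem cfc_sqrt_mul_cfc_inv_sqrt (hQ : Q.PosSemidef) :
    cfc Real.sqrt Q * cfc (fun x => (√x)⁻¹) Q = cfc (fun x : ℝ => x * x⁻¹) Q :=
  cfc_mul_cfc fun x hx => by
    rcases (hQ.nonneg_of_mem_spectrum hx).eq_or_lt with rfl | hx
    · simp
    · rw [mul_inv_cancel₀ (Real.sqrt_pos.2 hx).ne', mul_inv_cancel₀ hx.ne']

theorem cfc_inv_sqrt_mul_cfc_sqrt (hQ : Q.PosSemidef) :
    cfc (fun x => (√x)⁻¹) Q * cfc Real.sqrt Q = cfc (fun x : ℝ => x * x⁻¹) Q :=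
  (cfc_commute_cfc _ _ Q).eq.symm.trans (cfc_sqrt_mul_cfc_inv_sqrt hQ)

theorem eq_cfc_sqrt_mul_whitened_mul_cfc_sqrt (hQ : Q.PosSemidef) (hP : P.IsHermitian)
    (hPQ : LinearMap.range P.mulVecLin ≤ LinearMap.range Q.mulVecLin) :
    P = cfc Real.sqrt Q * whitened Q P * cfc Real.sqrt Q := by
  simp only [whitened, ← Matrix.mul_assoc]
  rw [cfc_sqrt_mul_cfc_inv_sqrt hQ, Matrix.mul_assoc _ _ (cfc Real.sqrt Q),
    cfc_inv_sqrt_mul_cfc_sqrt hQ, cfc_mul_inv_mul_eq_of_range_le hQ.isHermitian hPQ,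
    mul_cfc_mul_inv_eq_of_range_le hQ.isHermitian hP hPQ]

theorem exists_cfc_inv_mul_eq_conj_whitened (hQ : Q.PosSemidef) (hP : P.IsHermitian)
    (hPQ : LinearMap.range P.mulVecLin ≤ LinearMap.range Q.mulVecLin) :
    ∃ G : Matrix n n ℝ, IsUnit G.det ∧
      cfc (fun x : ℝ => x⁻¹) Q * P = G * whitened Q P * G⁻¹ := by
  set G := cfc (fun x => if x = 0 then 1 else (√x)⁻¹) Q
  set F := cfc (fun x => if x = 0 then 1 else √x) Q
  have hGF : G * F = 1 := by
    rw [cfc_mul_cfc (h := fun _ => 1) fun x hx => ?_,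
      cfc_const_one ℝ Q hQ.isHermitian.isSelfAdjoint]
    rcases (hQ.nonneg_of_mem_spectrum hx).eq_or_lt with rfl | hx
    · simp
    · simp [hx.ne', (Real.sqrt_pos.2 hx).ne']
  have hG : G * cfc (fun x => (√x)⁻¹) Q = cfc (fun x : ℝ => x⁻¹) Q := cfc_mul_cfc fun x hx => by
    rcases (hQ.nonneg_of_mem_spectrum hx).eq_or_lt with rfl | hx
    · simp
    · simp [hx.ne', ← mul_inv, Real.mul_self_sqrt hx.le]
  have hF : cfc (fun x => (√x)⁻¹) Q * F = cfc (fun x : ℝ => x * x⁻¹) Q := cfc_mul_cfc fun x hx => by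
    rcases (hQ.nonneg_of_mem_spectrum hx).eq_or_lt with rfl | hx
    · simp
    · simp [hx.ne', (Real.sqrt_pos.2 hx).ne']
  refine ⟨G, isUnit_det_of_right_inverse hGF, ?_⟩
  rw [inv_eq_right_inv hGF, whitened, ← hG]
  simp only [← Matrix.mul_assoc]
  rw [Matrix.mul_assoc _ _ F, hF, Matrix.mul_assoc _ P,
    mul_cfc_mul_inv_eq_of_range_le hQ.isHermitian hP hPQ]

theorem cfc_mul_inv_mul_whitened :
    cfc (fun x : ℝ => x * x⁻¹) Q * whitened Q P = whitened Q P := by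
  rw [whitened, ← Matrix.mul_assoc, ← Matrix.mul_assoc,
    cfc_mul_cfc (h := fun x => (√x)⁻¹) fun x _ => by
      rcases eq_or_ne x 0 with rfl | hx <;> simp [*]]

theorem whitened_mul_cfc_mul_inv :
    whitened Q P * cfc (fun x : ℝ => x * x⁻¹) Q = whitened Q P := by
  rw [whitened, Matrix.mul_assoc, cfc_mul_cfc (h := fun x => (√x)⁻¹) fun x _ => by
    rcases eq_or_ne x 0 with rfl | hx <;> simp [*]]

end Whitening

theorem CLTraceLoss_eq_of_eq_transpose_mul {N p : ℕ} {P Q R M : Matrix (Fin N) (Fin N) ℝ}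
    (hQ : Q = Rᵀ * R) (hP : P = Rᵀ * M * R) (W : Matrix (Fin p) (Fin N) ℝ) :
    CLTraceLoss P Q W = trace ((W * Rᵀ)ᵀ * (W * Rᵀ) * ((W * Rᵀ)ᵀ * (W * Rᵀ))) -
      2 * trace ((W * Rᵀ)ᵀ * (W * Rᵀ) * M) := by
  subst hQ hP
  rw [CLTraceLoss, trace_add, trace_smul, smul_eq_mul]
  simp only [transpose_mul, transpose_transpose, ← Matrix.mul_assoc]
  rw [trace_mul_comm _ R, trace_mul_comm _ R]
  simp only [Matrix.mul_assoc]
  ring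

theorem CLTraceLoss_eq_whitened {N p : ℕ} {P Q : Matrix (Fin N) (Fin N) ℝ} (hQ : Q.PosSemidef)
    (hP : P.IsHermitian) (hPQ : LinearMap.range P.mulVecLin ≤ LinearMap.range Q.mulVecLin)
    (W : Matrix (Fin p) (Fin N) ℝ) :
    CLTraceLoss P Q W =
      trace ((W * cfc Real.sqrt Q)ᵀ * (W * cfc Real.sqrt Q) *
        ((W * cfc Real.sqrt Q)ᵀ * (W * cfc Real.sqrt Q))) -
      2 * trace ((W * cfc Real.sqrt Q)ᵀ * (W * cfc Real.sqrt Q) * whitened Q P) := by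
  have hRR : Q = (cfc Real.sqrt Q)ᵀ * cfc Real.sqrt Q := by
    rw [cfc_transpose, cfc_mul_cfc fun x hx => Real.mul_self_sqrt (hQ.nonneg_of_mem_spectrum hx),
      cfc_id' ℝ Q hQ.isHermitian.isSelfAdjoint]
  have hRMR : P = (cfc Real.sqrt Q)ᵀ * whitened Q P * cfc Real.sqrt Q := by
    rw [cfc_transpose]; exact eq_cfc_sqrt_mul_whitened_mul_cfc_sqrt hQ hP hPQ
  simpa only [cfc_transpose] using CLTraceLoss_eq_of_eq_transpose_mul hRR hRMR W

theorem neg_sum_sq_le_CLTraceLoss {N p : ℕ} {P Q V : Matrix (Fin N) (Fin N) ℝ} {lam : Fin N → ℝ}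
    (hQ : Q.PosSemidef) (hP : P.IsHermitian)
    (hPQ : LinearMap.range P.mulVecLin ≤ LinearMap.range Q.mulVecLin) (hV : Vᵀ * V = 1)
    (hM : whitened Q P = V * diagonal lam * Vᵀ) (hlam : Antitone lam) (hlam0 : ∀ i, 0 ≤ lam i)
    (W : Matrix (Fin p) (Fin N) ℝ) :
    -(∑ i : Fin N, if (i : ℕ) < p then lam i ^ 2 else 0) ≤ CLTraceLoss P Q W := by
  rw [CLTraceLoss_eq_whitened hQ hP hPQ]
  exact neg_sum_sq_le_trace_transpose_mul_self_sub hV hM hlam hlam0 _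

theorem exists_CLTraceLoss_eq {N : ℕ} {P Q V : Matrix (Fin N) (Fin N) ℝ} {lam : Fin N → ℝ}
    (hQ : Q.PosSemidef) (hP : P.IsHermitian)
    (hPQ : LinearMap.range P.mulVecLin ≤ LinearMap.range Q.mulVecLin) (hV : Vᵀ * V = 1)
    (hM : whitened Q P = V * diagonal lam * Vᵀ) (hlam0 : ∀ i, 0 ≤ lam i) (p : ℕ) :
    ∃ W : Matrix (Fin p) (Fin N) ℝ,
      CLTraceLoss P Q W = -(∑ i : Fin N, if (i : ℕ) < p then lam i ^ 2 else 0) := by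
  set E := cfc (fun x : ℝ => x * x⁻¹) Q
  set s : Fin N → ℝ := fun i => if (i : ℕ) < p then 1 else 0
  set Y := V * diagonal (lam * s) * Vᵀ with hY
  -- the minimiser makes `R WᵀW R` the truncation `Y` of the whitened matrix to its top `p`
  -- eigenvalues
  have hYl : Y = whitened Q P * (V * diagonal s * Vᵀ) := by
    rw [hM, conj_diagonal_mul_conj_diagonal hV]
  have hYr : Y = V * diagonal s * Vᵀ * whitened Q P := by
    rw [hM, conj_diagonal_mul_conj_diagonal hV, mul_comm]
  have hEYE : E * Y * E = Y := by
    rw [hYl, ← Matrix.mul_assoc, cfc_mul_inv_mul_whitened, ← hYl, hYr, Matrix.mul_assoc,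
      whitened_mul_cfc_mul_inv]
  obtain ⟨C, hC⟩ := exists_transpose_mul_self_eq_diagonal_lt p hlam0
  have hCs : (diagonal fun i : Fin N => if (i : ℕ) < p then lam i else 0) = diagonal (lam * s) := by
    congr 1; ext i; simp [s]
  refine ⟨C * Vᵀ * cfc (fun x => (√x)⁻¹) Q, ?_⟩
  have hX : (C * Vᵀ * cfc (fun x => (√x)⁻¹) Q * cfc Real.sqrt Q)ᵀ *
      (C * Vᵀ * cfc (fun x => (√x)⁻¹) Q * cfc Real.sqrt Q) = Y := by
    simp only [transpose_mul, transpose_transpose, cfc_transpose, Matrix.mul_assoc]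
    rw [cfc_inv_sqrt_mul_cfc_sqrt hQ, ← Matrix.mul_assoc (cfc Real.sqrt Q),
      cfc_sqrt_mul_cfc_inv_sqrt hQ, ← hEYE, hY, ← hCs, ← hC]
    simp only [E, Matrix.mul_assoc]
  rw [CLTraceLoss_eq_whitened hQ hP hPQ, hX, hM, hY, trace_conj_diagonal_mul_conj_diagonal_self hV,
    trace_conj_diagonal_mul_conj_diagonal_self hV, Finset.mul_sum, ← sum_sub_distrib,
    ← sum_neg_distrib]
  refine sum_congr rfl fun i _ => ?_
  simp only [s, Pi.mul_apply]
  split_ifs <;> ring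

theorem stmt_7 (N : ℕ)
    (P Q : Matrix (Fin N) (Fin N) ℝ) (hP : P.PosSemidef) (hQ : Q.PosSemidef)
    (hcol : LinearMap.range P.mulVecLin ≤ LinearMap.range Q.mulVecLin)
    (Qd : Matrix (Fin N) (Fin N) ℝ) (hQd : IsPseudoinverse Q Qd) :
    (∃ (S : Matrix (Fin N) (Fin N) ℝ) (lam : Fin N → ℝ), IsUnit S.det ∧
      (∀ i, 0 ≤ lam i) ∧ Qd * P = S * Matrix.diagonal lam * S⁻¹) ∧
    (∀ lam : Fin N → ℝ, Antitone lam → (∀ i, 0 ≤ lam i) →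
      (∃ S : Matrix (Fin N) (Fin N) ℝ, IsUnit S.det ∧
        Qd * P = S * Matrix.diagonal lam * S⁻¹) →
      ∀ p : ℕ, 1 ≤ p →
        ∃ W : Matrix (Fin p) (Fin N) ℝ,
          (∀ W' : Matrix (Fin p) (Fin N) ℝ, CLTraceLoss P Q W ≤ CLTraceLoss P Q W') ∧
          CLTraceLoss P Q W = -(∑ i : Fin N, if (i : ℕ) < p then lam i ^ 2 else 0)) := by
  have hQd' : Qd = cfc (fun x : ℝ => x⁻¹) Q := hQd.unique_s7 (isPseudoinverse_cfc_inv hQ.isHermitian)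
  have hM : (whitened Q P).PosSemidef := whitened_posSemidef hP
  obtain ⟨U, hU, hMU⟩ := hM.isHermitian.exists_eq_conj_diagonal_eigenvalues
  have heig := hM.eigenvalues_nonneg
  generalize hM.isHermitian.eigenvalues = eig at hMU heig
  obtain ⟨G, hG, hQdP⟩ := exists_cfc_inv_mul_eq_conj_whitened hQ hP.isHermitian hcol
  have hGU : IsUnit (G * U).det := by
    rw [det_mul]; exact hG.mul (isUnit_det_of_left_inverse hU)
  have hsim : Qd * P = G * U * diagonal eig * (G * U)⁻¹ := by
    rw [hQd', hQdP, hMU, Matrix.mul_inv_rev, inv_eq_left_inv hU]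
    simp only [Matrix.mul_assoc]
  refine ⟨⟨G * U, eig, hGU, heig, hsim⟩, ?_⟩
  rintro lam hlam hlam0 ⟨S, hS, hSP⟩ p -
  obtain ⟨e, he⟩ := exists_equiv_comp_eq_of_conj_diagonal_eq hS hGU (hSP.symm.trans hsim)
  obtain ⟨V, hV, hMV⟩ := exists_conj_diagonal_eq_conj_diagonal_comp hU lam e
  rw [he, ← hMU] at hMV
  obtain ⟨W, hW⟩ := exists_CLTraceLoss_eq hQ hP.isHermitian hcol hV hMV hlam0 p
  exact ⟨W, fun W' => hW ▸ neg_sum_sq_le_CLTraceLoss hQ hP.isHermitian hcol hV hMV hlam hlam0 W',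
    hW⟩
end
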